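/- Let X ∈ ℝ^{K×d} be a feature matrix and r ∈ ℝ^K a mean-reward vector with distinct entries, |r(a)| ≤ R_max for all a, and reward gap Δ = min_{i≠j} |r(i) − r(j)| > 0. Let m : [K] → ℝ satisfy r(a)² ≤ m(a) ≤ R_max² for all a (second moments of the reward distributions). Then for every θ ∈ ℝ^d the stochastic gradient satisfies the strong growth condition: Σ_{a=1}^{K} π_θ(a) · m(a) · ‖X^⊤ (diag(π_θ) − π_θ π_θ^⊤) (e_a / π_θ(a))‖₂² ≤ (8 R_max³ K^{3/2} λ_max(X^⊤X) / Δ²) · ‖(diag(π_θ) − π_θ π_θ^⊤) r‖₂. -/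

import Mathlib

open scoped BigOperators
open Matrix

/-- Log-linear (softmax) policy `π_θ = softmax(Xθ)`. -/
noncomputable def policy {K d : ℕ} (X : Matrix (Fin K) (Fin d) ℝ) (θ : Fin d → ℝ) (a : Fin K) : ℝ :=
  Real.exp (∑ j, X a j * θ j) / ∑ b, Real.exp (∑ j, X b j * θ j)

theorem Matrix.isHermitian_transpose_mul_self {m n α : Type*} [Fintype m] [CommRing α] [StarRing α]
    [TrivialStar α] (A : Matrix m n α) : (A.transpose * A).IsHermitian := by
  rw [← Matrix.conjTranspose_eq_transpose_of_trivial]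
  exact Matrix.isHermitian_conjTranspose_mul_self A

/-- Largest eigenvalue of `XᵀX`. -/
noncomputable def lamMax {K d : ℕ} (X : Matrix (Fin K) (Fin d) ℝ) : ℝ :=
  ⨆ i, (Matrix.isHermitian_transpose_mul_self X).eigenvalues i

lemma sgc_lamMax_nonneg {K d : ℕ} (X : Matrix (Fin K) (Fin d) ℝ) : 0 ≤ lamMax X := by
  rcases isEmpty_or_nonempty (Fin d) with h | h
  · rw [lamMax, Real.iSup_of_isEmpty]
  · obtain ⟨i⟩ := h
    have h1 : 0 ≤ (isHermitian_transpose_mul_self X).eigenvalues i := by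
      have hp := Matrix.posSemidef_conjTranspose_mul_self X
      rw [conjTranspose_eq_transpose_of_trivial] at hp
      exact hp.eigenvalues_nonneg i
    exact le_trans h1 (le_ciSup (Set.Finite.bddAbove (Set.finite_range _)) i)

lemma sgc_quad_form_le {n : Type*} [Fintype n] [DecidableEq n] {A : Matrix n n ℝ}
    (hA : A.IsHermitian) {μ : ℝ} (hμ : ∀ i, hA.eigenvalues i ≤ μ) (v : n → ℝ) :
    v ⬝ᵥ (A *ᵥ v) ≤ μ * (v ⬝ᵥ v) := by
  classical
  set B := hA.eigenvectorBasis with hB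
  set x : EuclideanSpace ℝ n := (WithLp.equiv 2 (n → ℝ)).symm v with hx
  set y : EuclideanSpace ℝ n := (WithLp.equiv 2 (n → ℝ)).symm (A *ᵥ v) with hy
  have hinner : ∀ (u w : EuclideanSpace ℝ n), (inner ℝ u w : ℝ)
      = ((WithLp.equiv 2 (n → ℝ)) u) ⬝ᵥ ((WithLp.equiv 2 (n → ℝ)) w) := by
    intro u w
    simp [PiLp.inner_apply, RCLike.inner_apply, dotProduct, mul_comm]
  have hBy : ∀ i, (inner ℝ (B i) y : ℝ) = hA.eigenvalues i * (inner ℝ (B i) x : ℝ) := by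
    intro i
    have hm : A *ᵥ (WithLp.equiv 2 (n → ℝ)) (hA.eigenvectorBasis i)
        = hA.eigenvalues i • (WithLp.equiv 2 (n → ℝ)) (hA.eigenvectorBasis i) :=
      hA.mulVec_eigenvectorBasis i
    have hsymm : Aᵀ = A := by
      have := hA.eq; rwa [conjTranspose_eq_transpose_of_trivial] at this
    rw [hinner, hinner]
    have h1 : ((WithLp.equiv 2 (n → ℝ)) (B i)) ⬝ᵥ ((WithLp.equiv 2 (n → ℝ)) y)
        = (A *ᵥ (WithLp.equiv 2 (n → ℝ)) (B i)) ⬝ᵥ v := by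
      rw [hy, Equiv.apply_symm_apply, dotProduct_mulVec, ← mulVec_transpose, hsymm]
    rw [h1, hB, hm, smul_dotProduct, hx, Equiv.apply_symm_apply]
    simp [smul_eq_mul, dotProduct_comm]
  have e1 : v ⬝ᵥ (A *ᵥ v) = (inner ℝ x y : ℝ) := by
    rw [hinner, hx, hy, Equiv.apply_symm_apply, Equiv.apply_symm_apply]
  have e4 : v ⬝ᵥ v = (inner ℝ x x : ℝ) := by
    rw [hinner, hx, Equiv.apply_symm_apply]
  have e2 := B.sum_inner_mul_inner x y
  have e3 := B.sum_inner_mul_inner x x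
  rw [e1, e4, ← e2, ← e3, Finset.mul_sum]
  apply Finset.sum_le_sum
  intro i _
  rw [hBy i, real_inner_comm x (B i)]
  nlinarith [hμ i, mul_self_nonneg ((inner ℝ (B i) x : ℝ))]

lemma sgc_gradsq_le {K d : ℕ} (X : Matrix (Fin K) (Fin d) ℝ) (w : Fin K → ℝ) :
    ∑ j, (∑ b, X b j * w b) ^ 2 ≤ lamMax X * ∑ b, (w b) ^ 2 := by
  classical
  set u : Fin d → ℝ := Xᵀ *ᵥ w with hu
  have hμ : ∀ i, (isHermitian_transpose_mul_self X).eigenvalues i ≤ lamMax X :=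
    fun i => le_ciSup (Set.Finite.bddAbove (Set.finite_range _)) i
  have hLHS : ∑ j, (∑ b, X b j * w b) ^ 2 = u ⬝ᵥ u := by
    simp [hu, dotProduct, Matrix.mulVec, Matrix.transpose_apply, sq]
  have huu : u ⬝ᵥ u = w ⬝ᵥ (X *ᵥ u) := by
    rw [dotProduct_mulVec, ← mulVec_transpose, transpose_transpose, dotProduct_comm]
  have hXu : (X *ᵥ u) ⬝ᵥ (X *ᵥ u) = u ⬝ᵥ ((Xᵀ * X) *ᵥ u) := by
    rw [dotProduct_mulVec, ← mulVec_transpose, mulVec_mulVec, dotProduct_comm]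
  have hquad : u ⬝ᵥ ((Xᵀ * X) *ᵥ u) ≤ lamMax X * (u ⬝ᵥ u) :=
    sgc_quad_form_le (isHermitian_transpose_mul_self X) hμ u
  have hcs : (w ⬝ᵥ (X *ᵥ u)) ^ 2 ≤ (∑ b, (w b) ^ 2) * ((X *ᵥ u) ⬝ᵥ (X *ᵥ u)) := by
    have := Finset.sum_mul_sq_le_sq_mul_sq Finset.univ w (X *ᵥ u)
    simpa [dotProduct, sq] using this
  have hW : 0 ≤ ∑ b, (w b) ^ 2 := Finset.sum_nonneg fun _ _ => sq_nonneg _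
  have ht : 0 ≤ u ⬝ᵥ u := by
    simp only [dotProduct]
    exact Finset.sum_nonneg fun _ _ => mul_self_nonneg _
  rw [hLHS]
  rcases ht.eq_or_lt with h0 | hpos
  · rw [← h0]
    exact mul_nonneg (sgc_lamMax_nonneg X) hW
  · have key : (u ⬝ᵥ u) * (u ⬝ᵥ u) ≤ (lamMax X * ∑ b, (w b) ^ 2) * (u ⬝ᵥ u) := by
      have h1 : (u ⬝ᵥ u) ^ 2 ≤ (∑ b, (w b) ^ 2) * (lamMax X * (u ⬝ᵥ u)) := by
        calc (u ⬝ᵥ u) ^ 2 = (w ⬝ᵥ (X *ᵥ u)) ^ 2 := by rw [huu]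
          _ ≤ (∑ b, (w b) ^ 2) * ((X *ᵥ u) ⬝ᵥ (X *ᵥ u)) := hcs
          _ = (∑ b, (w b) ^ 2) * (u ⬝ᵥ ((Xᵀ * X) *ᵥ u)) := by rw [hXu]
          _ ≤ (∑ b, (w b) ^ 2) * (lamMax X * (u ⬝ᵥ u)) :=
              mul_le_mul_of_nonneg_left hquad hW
      nlinarith [h1]
    exact le_of_mul_le_mul_right key hpos

/-- Strong growth condition: the expected squared norm of the importance-sampled stochastic
gradient is bounded by `(8 R_max³ K^{3/2} λ_max(XᵀX)/Δ²)` times the norm of the true gradient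
with respect to the logits. -/
theorem strong_growth_condition {K d : ℕ} (hK : 2 ≤ K)
    (X : Matrix (Fin K) (Fin d) ℝ) (r : Fin K → ℝ)
    (Rmax Δ : ℝ) (hRmax : 0 < Rmax) (hr : ∀ a, |r a| ≤ Rmax)
    (hdistinct : ∀ i j : Fin K, i ≠ j → r i ≠ r j)
    (hΔ : IsLeast {x : ℝ | ∃ i j : Fin K, i ≠ j ∧ x = |r i - r j|} Δ) (hΔpos : 0 < Δ)
    (m : Fin K → ℝ) (hm : ∀ a, (r a) ^ 2 ≤ m a ∧ m a ≤ Rmax ^ 2)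
    (θ : Fin d → ℝ) :
    ∑ a, policy X θ a * m a *
        (∑ j, (∑ b, X b j * (policy X θ b *
          ((if b = a then 1 / policy X θ a else 0) -
            ∑ c, policy X θ c * (if c = a then 1 / policy X θ a else 0)))) ^ 2)
      ≤ (8 * Rmax ^ 3 * (K : ℝ) ^ ((3 : ℝ) / 2) * lamMax X / Δ ^ 2) *
          Real.sqrt (∑ a, (policy X θ a * (r a - ∑ b, policy X θ b * r b)) ^ 2) := by
  classical
  have hKpos : 0 < K := by omega
  haveI : Nonempty (Fin K) := ⟨⟨0, hKpos⟩⟩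
  set π := policy X θ with hπ
  have hexp : 0 < ∑ b, Real.exp (∑ j, X b j * θ j) :=
    Finset.sum_pos (fun b _ => Real.exp_pos _) Finset.univ_nonempty
  have hπpos : ∀ a, 0 < π a := by
    intro a
    simp only [hπ, policy]
    exact div_pos (Real.exp_pos _) hexp
  have hπsum : ∑ a, π a = 1 := by
    simp only [hπ, policy, ← Finset.sum_div]
    exact div_self hexp.ne'
  have hπle1 : ∀ a, π a ≤ 1 := by
    intro a
    rw [← hπsum]
    exact Finset.single_le_sum (fun b _ => (hπpos b).le) (Finset.mem_univ a)
  set rbar := ∑ b, π b * r b with hrbar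
  set G := ∑ a, (π a * (r a - rbar)) ^ 2 with hG
  set lam := lamMax X with hlam
  have hlam0 : 0 ≤ lam := sgc_lamMax_nonneg X
  -- simplification of the stochastic gradient coefficient
  have hsum_ite : ∀ a : Fin K, ∑ c, π c * (if c = a then 1 / π a else 0) = 1 := by
    intro a
    have h1 : ∀ c, π c * (if c = a then 1 / π a else 0)
        = if c = a then π c / π a else 0 := by
      intro c
      by_cases h : c = a
      · rw [if_pos h, if_pos h, mul_one_div]
      · rw [if_neg h, if_neg h, mul_zero]
    rw [Finset.sum_congr rfl fun c _ => h1 c,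
      Finset.sum_ite_eq' Finset.univ a (fun c => π c / π a)]
    simp [div_self (hπpos a).ne']
  have hsimp : ∀ a b : Fin K, π b * ((if b = a then 1 / π a else 0) -
      ∑ c, π c * (if c = a then 1 / π a else 0)) = (if b = a then 1 else 0) - π b := by
    intro a b
    rw [hsum_ite a]
    by_cases h : b = a
    · subst h
      have hb := (hπpos b).ne'
      rw [if_pos rfl, if_pos rfl]
      field_simp
    · simp [h]
  -- per-action squared-norm bound
  have hnorm : ∀ a : Fin K, ∑ b, ((if b = a then (1:ℝ) else 0) - π b) ^ 2
      ≤ 2 * (1 - π a) := by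
    intro a
    have hsplit : ∑ b, ((if b = a then (1:ℝ) else 0) - π b) ^ 2
        = (1 - π a) ^ 2 + ∑ b ∈ Finset.univ.erase a, (π b) ^ 2 := by
      rw [← Finset.add_sum_erase Finset.univ _ (Finset.mem_univ a)]
      congr 1
      · simp
      · refine Finset.sum_congr rfl fun b hb => ?_
        have hba : b ≠ a := Finset.ne_of_mem_erase hb
        simp [hba]
    have h3 : ∑ b ∈ Finset.univ.erase a, π b = 1 - π a := by
      have h := Finset.add_sum_erase Finset.univ π (Finset.mem_univ a)
      rw [hπsum] at h
      linarith
    have h2 : ∑ b ∈ Finset.univ.erase a, (π b) ^ 2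
        ≤ ∑ b ∈ Finset.univ.erase a, π b :=
      Finset.sum_le_sum fun b _ => by nlinarith [hπpos b, hπle1 b]
    have h4 : (1 - π a) ^ 2 ≤ 1 - π a := by nlinarith [hπpos a, hπle1 a]
    rw [hsplit]
    linarith
  -- variance facts
  set Var := ∑ a, π a * (r a - rbar) ^ 2 with hVar
  set T := ∑ a, π a * (1 - π a) with hT
  have hS1 : ∑ b, π b * (r b - rbar) = 0 := by
    have : ∑ b, π b * (r b - rbar) = (∑ b, π b * r b) - (∑ b, π b) * rbar := by
      rw [Finset.sum_mul]
      rw [← Finset.sum_sub_distrib]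
      exact Finset.sum_congr rfl fun b _ => by ring
    rw [this, hπsum, ← hrbar]
    ring
  have hdouble : ∑ a, ∑ b, π a * π b * (r a - r b) ^ 2 = 2 * Var := by
    have h1 : ∀ a : Fin K, ∑ b, π a * π b * (r a - r b) ^ 2
        = π a * (r a - rbar) ^ 2 * (∑ b, π b)
          - 2 * (π a * (r a - rbar)) * (∑ b, π b * (r b - rbar))
          + π a * (∑ b, π b * (r b - rbar) ^ 2) := by
      intro a
      have hterm : ∀ b, π a * π b * (r a - r b) ^ 2
          = π a * (r a - rbar) ^ 2 * π b
            - 2 * (π a * (r a - rbar)) * (π b * (r b - rbar))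
            + π a * (π b * (r b - rbar) ^ 2) := fun b => by ring
      rw [Finset.sum_congr rfl fun b _ => hterm b, Finset.sum_add_distrib,
        Finset.sum_sub_distrib, ← Finset.mul_sum, ← Finset.mul_sum, ← Finset.mul_sum]
    calc ∑ a, ∑ b, π a * π b * (r a - r b) ^ 2
        = ∑ a, (π a * (r a - rbar) ^ 2 * 1 - 2 * (π a * (r a - rbar)) * 0
            + π a * Var) := by
          refine Finset.sum_congr rfl fun a _ => ?_
          rw [h1 a, hπsum, hS1, ← hVar]
      _ = (∑ a, π a * (r a - rbar) ^ 2) + (∑ a, π a) * Var := by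
          rw [Finset.sum_add_distrib, ← Finset.sum_mul]
          congr 1
          exact Finset.sum_congr rfl fun a _ => by ring
      _ = 2 * Var := by rw [hπsum, ← hVar]; ring
  have hTeq : T = ∑ a, ∑ b, (if b = a then 0 else π a * π b) := by
    rw [hT]
    refine Finset.sum_congr rfl fun a _ => ?_
    have h5 : ∑ b, (if b = a then (0:ℝ) else π b) = 1 - π a := by
      have h6 : ∀ b, (if b = a then (0:ℝ) else π b)
          = π b - (if b = a then π b else 0) := by
        intro b; by_cases h : b = a <;> simp [h]
      rw [Finset.sum_congr rfl fun b _ => h6 b, Finset.sum_sub_distrib, hπsum,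
        Finset.sum_ite_eq' Finset.univ a π]
      simp
    rw [← h5, Finset.mul_sum]
    exact Finset.sum_congr rfl fun b _ => by by_cases h : b = a <;> simp [h]
  have hΔT : Δ ^ 2 * T ≤ 2 * Var := by
    rw [← hdouble, hTeq, Finset.mul_sum]
    refine Finset.sum_le_sum fun a _ => ?_
    rw [Finset.mul_sum]
    refine Finset.sum_le_sum fun b _ => ?_
    by_cases h : b = a
    · simp [h]
    · have hab : a ≠ b := fun hc => h hc.symm
      have hmem : |r a - r b| ∈ {x : ℝ | ∃ i j : Fin K, i ≠ j ∧ x = |r i - r j|} :=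
        ⟨a, b, hab, rfl⟩
      have hΔle : Δ ≤ |r a - r b| := hΔ.2 hmem
      have hsq : Δ ^ 2 ≤ (r a - r b) ^ 2 := by
        rw [← sq_abs (r a - r b)]
        exact pow_le_pow_left₀ hΔpos.le hΔle 2
      have hππ : 0 ≤ π a * π b := mul_nonneg (hπpos a).le (hπpos b).le
      calc Δ ^ 2 * (if b = a then 0 else π a * π b) = Δ ^ 2 * (π a * π b) := by
            rw [if_neg h]
        _ ≤ (r a - r b) ^ 2 * (π a * π b) := mul_le_mul_of_nonneg_right hsq hππ
        _ = π a * π b * (r a - r b) ^ 2 := by ring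
  have hrbar_abs : |rbar| ≤ Rmax := by
    calc |rbar| ≤ ∑ b, |π b * r b| := by
          rw [hrbar]; exact Finset.abs_sum_le_sum_abs _ _
      _ = ∑ b, π b * |r b| := Finset.sum_congr rfl fun b _ => by
          rw [abs_mul, abs_of_pos (hπpos b)]
      _ ≤ ∑ b, π b * Rmax :=
          Finset.sum_le_sum fun b _ => mul_le_mul_of_nonneg_left (hr b) (hπpos b).le
      _ = Rmax := by rw [← Finset.sum_mul, hπsum, one_mul]
  have hVar2 : Var ≤ 2 * Rmax * ∑ a, |π a * (r a - rbar)| := by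
    rw [hVar, Finset.mul_sum]
    refine Finset.sum_le_sum fun a _ => ?_
    have habs : |r a - rbar| ≤ 2 * Rmax := by
      calc |r a - rbar| ≤ |r a| + |rbar| := abs_sub _ _
        _ ≤ Rmax + Rmax := add_le_add (hr a) hrbar_abs
        _ = 2 * Rmax := by ring
    have heq : π a * (r a - rbar) ^ 2 = |π a * (r a - rbar)| * |r a - rbar| := by
      rw [abs_mul, abs_of_pos (hπpos a), mul_assoc, abs_mul_abs_self, ← sq]
    rw [heq]
    calc |π a * (r a - rbar)| * |r a - rbar|
        ≤ |π a * (r a - rbar)| * (2 * Rmax) :=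
          mul_le_mul_of_nonneg_left habs (abs_nonneg _)
      _ = 2 * Rmax * |π a * (r a - rbar)| := by ring
  have hCS2 : ∑ a, |π a * (r a - rbar)| ≤ Real.sqrt K * Real.sqrt G := by
    have hsq := sq_sum_le_card_mul_sum_sq (s := (Finset.univ : Finset (Fin K)))
      (f := fun a : Fin K => |π a * (r a - rbar)|)
    have hcard : (((Finset.univ : Finset (Fin K))).card : ℝ) = (K : ℝ) := by simp
    have habs2 : ∑ a, |π a * (r a - rbar)| ^ 2 = G := by
      rw [hG]; exact Finset.sum_congr rfl fun a _ => by rw [sq_abs]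
    have hKG : (∑ a, |π a * (r a - rbar)|) ^ 2 ≤ (K : ℝ) * G := by
      calc (∑ a, |π a * (r a - rbar)|) ^ 2
          ≤ (((Finset.univ : Finset (Fin K))).card : ℝ) * ∑ a, |π a * (r a - rbar)| ^ 2 := by
            exact_mod_cast hsq
        _ = (K : ℝ) * G := by rw [hcard, habs2]
    have hnn : 0 ≤ ∑ a, |π a * (r a - rbar)| :=
      Finset.sum_nonneg fun a _ => abs_nonneg _
    calc ∑ a, |π a * (r a - rbar)|
        = Real.sqrt ((∑ a, |π a * (r a - rbar)|) ^ 2) := (Real.sqrt_sq hnn).symm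
      _ ≤ Real.sqrt ((K : ℝ) * G) := Real.sqrt_le_sqrt hKG
      _ = Real.sqrt K * Real.sqrt G := Real.sqrt_mul (by positivity) _
  have hTbound : T ≤ 4 * Rmax * (Real.sqrt K * Real.sqrt G) / Δ ^ 2 := by
    rw [le_div_iff₀ (by positivity : (0:ℝ) < Δ ^ 2)]
    have : Δ ^ 2 * T ≤ 4 * Rmax * (Real.sqrt K * Real.sqrt G) := by
      calc Δ ^ 2 * T ≤ 2 * Var := hΔT
        _ ≤ 2 * (2 * Rmax * ∑ a, |π a * (r a - rbar)|) := by linarith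
        _ ≤ 2 * (2 * Rmax * (Real.sqrt K * Real.sqrt G)) := by
            have h7 : 0 ≤ 2 * Rmax := by positivity
            nlinarith [hCS2, hRmax]
        _ = 4 * Rmax * (Real.sqrt K * Real.sqrt G) := by ring
    linarith [this]
  -- main chain
  have hmain : ∑ a, π a * m a *
      (∑ j, (∑ b, X b j * (π b * ((if b = a then 1 / π a else 0) -
        ∑ c, π c * (if c = a then 1 / π a else 0)))) ^ 2)
      ≤ 2 * lam * Rmax ^ 2 * T := by
    calc ∑ a, π a * m a *
        (∑ j, (∑ b, X b j * (π b * ((if b = a then 1 / π a else 0) -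
          ∑ c, π c * (if c = a then 1 / π a else 0)))) ^ 2)
        = ∑ a, π a * m a *
          (∑ j, (∑ b, X b j * ((if b = a then 1 else 0) - π b)) ^ 2) := by
          refine Finset.sum_congr rfl fun a _ => ?_
          congr 1
          refine Finset.sum_congr rfl fun j _ => ?_
          congr 1
          exact Finset.sum_congr rfl fun b _ => by rw [hsimp a b]
      _ ≤ ∑ a, π a * m a * (lam * (2 * (1 - π a))) := by
          refine Finset.sum_le_sum fun a _ => ?_
          have hma : 0 ≤ m a := le_trans (sq_nonneg _) (hm a).1
          have h8 := sgc_gradsq_le X (fun b => (if b = a then (1:ℝ) else 0) - π b)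
          have h9 : lamMax X * ∑ b, ((if b = a then (1:ℝ) else 0) - π b) ^ 2
              ≤ lam * (2 * (1 - π a)) := by
            rw [← hlam]
            exact mul_le_mul_of_nonneg_left (hnorm a) hlam0
          exact mul_le_mul_of_nonneg_left (h8.trans h9)
            (mul_nonneg (hπpos a).le hma)
      _ ≤ ∑ a, π a * Rmax ^ 2 * (lam * (2 * (1 - π a))) := by
          refine Finset.sum_le_sum fun a _ => ?_
          have h10 : 0 ≤ lam * (2 * (1 - π a)) :=
            mul_nonneg hlam0 (by linarith [hπle1 a])
          exact mul_le_mul_of_nonneg_right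
            (mul_le_mul_of_nonneg_left (hm a).2 (hπpos a).le) h10
      _ = 2 * lam * Rmax ^ 2 * T := by
          rw [hT, Finset.mul_sum]
          exact Finset.sum_congr rfl fun a _ => by ring
  have hfinal : 2 * lam * Rmax ^ 2 * T
      ≤ (8 * Rmax ^ 3 * (K : ℝ) ^ ((3 : ℝ) / 2) * lam / Δ ^ 2) * Real.sqrt G := by
    have hc : 0 ≤ 2 * lam * Rmax ^ 2 := by positivity
    have step1 : 2 * lam * Rmax ^ 2 * T
        ≤ 2 * lam * Rmax ^ 2 * (4 * Rmax * (Real.sqrt K * Real.sqrt G) / Δ ^ 2) :=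
      mul_le_mul_of_nonneg_left hTbound hc
    have step2 : 2 * lam * Rmax ^ 2 * (4 * Rmax * (Real.sqrt K * Real.sqrt G) / Δ ^ 2)
        = (8 * Rmax ^ 3 * Real.sqrt K * lam / Δ ^ 2) * Real.sqrt G := by ring
    have hk32 : Real.sqrt K ≤ (K : ℝ) ^ ((3 : ℝ) / 2) := by
      rw [Real.sqrt_eq_rpow]
      apply Real.rpow_le_rpow_of_exponent_le
      · exact_mod_cast Nat.one_le_iff_ne_zero.mpr (by omega)
      · norm_num
    have step3 : (8 * Rmax ^ 3 * Real.sqrt K * lam / Δ ^ 2) * Real.sqrt G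
        ≤ (8 * Rmax ^ 3 * (K : ℝ) ^ ((3 : ℝ) / 2) * lam / Δ ^ 2) * Real.sqrt G := by
      apply mul_le_mul_of_nonneg_right _ (Real.sqrt_nonneg _)
      apply (div_le_div_iff_of_pos_right (by positivity : (0:ℝ) < Δ ^ 2)).mpr
      exact mul_le_mul_of_nonneg_right
        (mul_le_mul_of_nonneg_left hk32 (by positivity : (0:ℝ) ≤ 8 * Rmax ^ 3)) hlam0
    calc 2 * lam * Rmax ^ 2 * T
        ≤ 2 * lam * Rmax ^ 2 * (4 * Rmax * (Real.sqrt K * Real.sqrt G) / Δ ^ 2) := step1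
      _ = (8 * Rmax ^ 3 * Real.sqrt K * lam / Δ ^ 2) * Real.sqrt G := step2
      _ ≤ (8 * Rmax ^ 3 * (K : ℝ) ^ ((3 : ℝ) / 2) * lam / Δ ^ 2) * Real.sqrt G := step3
  exact hmain.trans hfinal
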